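/- arXiv:1902.10731 — 4 statements merged into one kernel-verified Lean document; each statement's English description precedes it below -/
import Mathlib

section
/- The Tukey depth of a point x with respect to a finite multiset S in ℝ^d equals the size of the smallest sub-multiset A ⊆ S such that x is not in the convex hull of S \ A. -/
open scoped Classical

/-- The Tukey depth of `x` w.r.t. the multiset `S`. -/
noncomputable def td {d : ℕ} (S : Multiset (Fin d → ℝ)) (x : Fin d → ℝ) : ℕ :=
  sInf {n | ∃ a : Fin d → ℝ, a ≠ 0 ∧ ∃ w : ℝ,
    w ≤ ∑ j, a j * x j ∧ n = (S.filter fun y => w ≤ ∑ j, a j * y j).card}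

/-! If `w ≤ a ⬝ᵥ x`, removing the points of `S` in the closed halfspace `{y | w ≤ a ⬝ᵥ y}` leaves
points in the open halfspace `{y | a ⬝ᵥ y < w}`, a convex set missing `x`. Conversely, if `x` is
not in the (compact) convex hull of `S - A`, Hahn–Banach separates them strictly by a hyperplane,
and the closed halfspace on the side of `x` meets `S` only inside `A`. -/

theorem Nat.sInf_eq_sInf_of_subset_of_forall_exists_le {s t : Set ℕ} (hst : s ⊆ t)
    (hts : ∀ m ∈ t, ∃ n ∈ s, n ≤ m) : sInf s = sInf t := by
  rcases t.eq_empty_or_nonempty with rfl | ht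
  · rw [Set.subset_empty_iff.mp hst]
  obtain ⟨n, hn, hle⟩ := hts _ (Nat.sInf_mem ht)
  exact le_antisymm ((Nat.sInf_le hn).trans hle) (Nat.sInf_le (hst (Nat.sInf_mem ⟨n, hn⟩)))

theorem Multiset.filter_le_of_forall_mem_sub_not {α : Type*} [DecidableEq α] {p : α → Prop}
    [DecidablePred p] {s t : Multiset α} (hts : t ≤ s) (h : ∀ y ∈ s - t, ¬ p y) :
    s.filter p ≤ t := by
  calc s.filter p = (s - t).filter p + t.filter p := by
        rw [← Multiset.filter_add, tsub_add_cancel_of_le hts]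
    _ = t.filter p := by rw [Multiset.filter_eq_nil.mpr h, zero_add]
    _ ≤ t := Multiset.filter_le _ _

section DotProduct

variable {ι : Type*} [Fintype ι]

theorem convex_dotProduct_lt (a : ι → ℝ) (w : ℝ) : Convex ℝ {y : ι → ℝ | a ⬝ᵥ y < w} :=
  convex_halfSpace_lt ((dotProductBilin ℝ ℝ a).isLinear) w

theorem notMem_convexHull_sub_filter_le_dotProduct {S : Multiset (ι → ℝ)}
    {x a : ι → ℝ} {w : ℝ} (hx : w ≤ a ⬝ᵥ x) :
    x ∉ convexHull ℝ {y | y ∈ S - S.filter fun y => w ≤ a ⬝ᵥ y} := by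
  intro hmem
  have hsub : {y | y ∈ S - S.filter fun y => w ≤ a ⬝ᵥ y} ⊆ {y | a ⬝ᵥ y < w} := fun y hy => by
    simp only [Set.mem_ofPred_eq, Multiset.sub_filter_eq_filter_not, Multiset.mem_filter] at hy
    exact not_le.mp hy.2
  exact (convexHull_min hsub (convex_dotProduct_lt a w) hmem).not_ge hx

theorem exists_dotProduct_separation_of_notMem_convexHull [Nonempty ι] {s : Set (ι → ℝ)}
    (hs : s.Finite) {x : ι → ℝ} (hx : x ∉ convexHull ℝ s) :
    ∃ a ≠ 0, ∃ w, w ≤ a ⬝ᵥ x ∧ ∀ y ∈ s, a ⬝ᵥ y < w := by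
  rcases s.eq_empty_or_nonempty with rfl | ⟨y₀, hy₀⟩
  · obtain ⟨a, ha⟩ := exists_ne (0 : ι → ℝ)
    exact ⟨a, ha, a ⬝ᵥ x, le_rfl, by simp⟩
  obtain ⟨f, u, hfs, hfx⟩ := geometric_hahn_banach_closed_point (convex_convexHull ℝ s)
    (hs.isClosed_convexHull (𝕜 := ℝ)) hx
  obtain ⟨a, haf⟩ := (dotProductEquiv ℝ ι).surjective f
  have hfa : ∀ y, f y = a ⬝ᵥ y := fun y => by
    rw [← ContinuousLinearMap.coe_coe f, ← haf, dotProductEquiv_apply_apply]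
  have hs' : ∀ y ∈ s, a ⬝ᵥ y < u := fun y hy => hfa y ▸ hfs y (subset_convexHull ℝ s hy)
  refine ⟨a, ?_, u, (hfa x ▸ hfx).le, hs'⟩
  rintro rfl
  linarith [hs' y₀ hy₀, hfa x ▸ hfx, zero_dotProduct y₀, zero_dotProduct x]

end DotProduct

/-- The Tukey depth of a point `x` equals the size of the smallest sub-multiset `A ⊆ S`
such that `x` is not in the convex hull of `S \ A`. -/
theorem td_eq_min_removal {d : ℕ} (hd : 1 ≤ d) (S : Multiset (Fin d → ℝ)) (x : Fin d → ℝ) :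
    td S x = sInf {k | ∃ A ≤ S, A.card = k ∧ x ∉ convexHull ℝ {y | y ∈ S - A}} := by
  have : Nonempty (Fin d) := ⟨⟨0, hd⟩⟩
  refine Nat.sInf_eq_sInf_of_subset_of_forall_exists_le ?_ ?_
  · rintro n ⟨a, -, w, hwx, rfl⟩
    exact ⟨_, Multiset.filter_le _ _, rfl, notMem_convexHull_sub_filter_le_dotProduct hwx⟩
  · rintro k ⟨A, hAS, rfl, hx⟩
    obtain ⟨a, ha, w, hwx, hsep⟩ :=
      exists_dotProduct_separation_of_notMem_convexHull (S - A).finite_toSet hx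
    refine ⟨_, ⟨a, ha, w, hwx, rfl⟩, Multiset.card_le_card ?_⟩
    exact Multiset.filter_le_of_forall_mem_sub_not hAS fun y hy => (hsep y hy).not_ge
end

section
/- For every finite nonempty multiset S of points in ℝ^d, there exists a point x ∈ ℝ^d whose Tukey depth with respect to S is at least |S|/(d+1). (Centerpoint theorem.) -/
open scoped Classical

-- card of filter of "fails some B in I" is at most sum of misses
set_option maxHeartbeats 1000000 in
lemma aux_card_filter {α : Type*} [DecidableEq α] (S : Multiset α) (I : Finset (Finset α)) :
    (S.filter (fun y => ¬ ∀ B ∈ I, y ∈ B)).card ≤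
      ∑ B ∈ I, (S.filter (fun y => y ∉ B)).card := by
  induction I using Finset.induction with
  | empty => simp [Multiset.filter_eq_nil]
  | @insert C I hC ih =>
    have h1 : (S.filter (fun y => ¬ ∀ B ∈ insert C I, y ∈ B)) =
        (S.filter (fun y => (y ∉ C) ∨ ¬ ∀ B ∈ I, y ∈ B)) := by
      apply Multiset.filter_congr
      intro y _
      simp [Finset.mem_insert]
      tauto
    have h2 := Multiset.filter_add_filter (fun y => y ∉ C) (fun y => ¬ ∀ B ∈ I, y ∈ B) S
    have h3 := congrArg Multiset.card h2
    simp only [Multiset.card_add] at h3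
    rw [h1, Finset.sum_insert hC]
    have : (S.filter (fun y => (y ∉ C) ∨ ¬ ∀ B ∈ I, y ∈ B)).card ≤
        (S.filter (fun y => y ∉ C)).card + (S.filter (fun y => ¬ ∀ B ∈ I, y ∈ B)).card := by
      omega
    exact this.trans (by gcongr)


set_option maxHeartbeats 1000000 in
/-- Centerpoint theorem: every finite nonempty multiset `S` in `ℝ^d` admits a point of
Tukey depth at least `|S| / (d+1)`. -/
theorem exists_centerpoint {d : ℕ} (hd : 1 ≤ d)
    (S : Multiset (Fin d → ℝ)) (hS : S ≠ 0) :
    ∃ x : Fin d → ℝ, (S.card : ℝ) / (d + 1) ≤ (td S x : ℝ) := by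
  set N := S.card with hN
  have hN0 : 0 < N := Multiset.card_pos.mpr hS
  set s : Finset (Finset (Fin d → ℝ)) :=
    S.toFinset.powerset.filter
      (fun B => (d + 1) * (S.filter (fun y => y ∉ B)).card < N) with hs
  -- key intersection property
  have key : ∀ I : Finset (Finset (Fin d → ℝ)), I ⊆ s → I.card ≤ d + 1 →
      ∃ y, y ∈ S ∧ ∀ B ∈ I, y ∈ B := by
    intro I hIs hIc
    have hmiss : ∀ B ∈ I, (d + 1) * (S.filter (fun y => y ∉ B)).card < N := by
      intro B hB
      exact (Finset.mem_filter.mp (hIs hB)).2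
    have hsum : ∑ B ∈ I, (S.filter (fun y => y ∉ B)).card ≤ N - 1 := by
      have h1 : (d + 1) * ∑ B ∈ I, (S.filter (fun y => y ∉ B)).card ≤ (d + 1) * (N - 1) := by
        rw [Finset.mul_sum]
        calc ∑ B ∈ I, (d + 1) * (S.filter (fun y => y ∉ B)).card
            ≤ ∑ _B ∈ I, (N - 1) := Finset.sum_le_sum (fun B hB => by have := hmiss B hB; omega)
          _ = I.card * (N - 1) := by rw [Finset.sum_const, smul_eq_mul]
          _ ≤ (d + 1) * (N - 1) := by exact Nat.mul_le_mul_right _ hIc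
      exact Nat.le_of_mul_le_mul_left h1 (by omega)
    have hbad := (aux_card_filter S I).trans hsum
    have hgood : (S.filter (fun y => ∀ B ∈ I, y ∈ B)).card ≠ 0 := by
      have hsplit : (S.filter (fun y => ∀ B ∈ I, y ∈ B)) +
          (S.filter (fun y => ¬ ∀ B ∈ I, y ∈ B)) = S := Multiset.filter_add_not _ S
      have := congrArg Multiset.card hsplit
      simp only [Multiset.card_add] at this
      omega
    have hne0 : S.filter (fun y => ∀ B ∈ I, y ∈ B) ≠ 0 :=
      fun h => hgood (by rw [h, Multiset.card_zero])
    obtain ⟨y, hy⟩ := Multiset.exists_mem_of_ne_zero hne0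
    rw [Multiset.mem_filter] at hy
    exact ⟨y, hy.1, hy.2⟩
  -- Helly
  have hx : (⋂ B ∈ s, convexHull ℝ (B : Set (Fin d → ℝ))).Nonempty := by
    apply Convex.helly_theorem' (𝕜 := ℝ)
    · intro B _; exact convex_convexHull ℝ _
    · intro I hIs hIc
      rw [Module.finrank_fin_fun (R := ℝ)] at hIc
      obtain ⟨y, _, hy⟩ := key I hIs hIc
      exact ⟨y, Set.mem_biInter fun B hB => subset_convexHull ℝ _ (hy B hB)⟩
  obtain ⟨x, hx⟩ := hx
  refine ⟨x, ?_⟩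
  -- the defining set of td is nonempty
  have hne : {n | ∃ a : Fin d → ℝ, a ≠ 0 ∧ ∃ w : ℝ,
      w ≤ ∑ j, a j * x j ∧ n = (S.filter fun y => w ≤ ∑ j, a j * y j).card}.Nonempty := by
    refine ⟨_, (fun _ => (1:ℝ)), ?_, ∑ j, (1:ℝ) * x j, le_refl _, rfl⟩
    intro h
    have := congrFun h ⟨0, hd⟩
    simp at this
  obtain ⟨a, ha, w, hw, hcard⟩ := Nat.sInf_mem hne
  have htd : td S x = (S.filter fun y => w ≤ ∑ j, a j * y j).card := hcard
  -- main bound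
  have hmain : N ≤ (d + 1) * (S.filter fun y => w ≤ ∑ j, a j * y j).card := by
    by_contra hcon
    push_neg at hcon
    set B : Finset (Fin d → ℝ) :=
      S.toFinset.filter (fun y => ¬ w ≤ ∑ j, a j * y j) with hB
    have hBs : B ∈ s := by
      rw [hs, Finset.mem_filter]
      refine ⟨Finset.mem_powerset.mpr (Finset.filter_subset _ _), ?_⟩
      have heq : S.filter (fun y => y ∉ B) = S.filter (fun y => w ≤ ∑ j, a j * y j) := by
        apply Multiset.filter_congr
        intro y hy
        simp [hB, Finset.mem_filter, Multiset.mem_toFinset, hy]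
      rw [heq]
      exact hcon
    have hxB : x ∈ convexHull ℝ (B : Set (Fin d → ℝ)) := Set.mem_iInter₂.mp hx B hBs
    have hlin : IsLinearMap ℝ (fun y : Fin d → ℝ => ∑ j, a j * y j) := by
      constructor
      · intro p q; simp [mul_add, Finset.sum_add_distrib]
      · intro c p; simp [Finset.mul_sum, mul_left_comm]
    have hsub : convexHull ℝ (B : Set (Fin d → ℝ)) ⊆ {y | (∑ j, a j * y j) < w} := by
      apply convexHull_min
      · intro y hy
        simp only [hB, Finset.coe_filter, Set.mem_setOf_eq] at hy
        exact lt_of_not_ge hy.2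
      · exact convex_halfSpace_lt hlin w
    have := hsub hxB
    simp only [Set.mem_setOf_eq] at this
    linarith
  -- conclude
  rw [htd]
  rw [div_le_iff₀ (by positivity : (0:ℝ) < (d:ℝ) + 1)]
  calc (N : ℝ) ≤ ((d + 1) * (S.filter fun y => w ≤ ∑ j, a j * y j).card : ℕ) := by
        exact_mod_cast hmain
    _ = ((S.filter fun y => w ≤ ∑ j, a j * y j).card : ℝ) * ((d:ℝ) + 1) := by
        push_cast; ring
end

section
/- The number of distinct halfspace classifiers on a finite set X ⊆ ℝ^d is at most 2|X|^{d+1}: |{hs_{a,w} restricted to X : a ∈ ℝ^d, w ∈ ℝ}| ≤ 2|X|^{d+1}, where hs_{a,w}(x) = 1 iff ⟨a,x⟩ ≥ w. -/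
open scoped Classical

/-!
By Radon's theorem any `d + 2` points of `ℝ^d` split into two parts whose convex hulls meet, and
a closed halfspace cannot contain one part while missing the other. Hence the halfspace traces
on `X` shatter no set of `d + 2` points, and the Sauer–Shelah lemma bounds their number by
`∑_{k ≤ d + 1} (|X| choose k) ≤ |X|^(d+1) + 1`.
-/

open Finset

theorem Nat.choose_add_two_add_pow_le (n k : ℕ) :
    n.choose (k + 2) + n ^ (k + 1) ≤ n ^ (k + 2) := by
  obtain _ | N := n
  · simp
  have hchoose : (N + 1).choose (k + 2) ≤ (N + 1) * N ^ (k + 1) :=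
    calc (N + 1).choose (k + 2) ≤ (N + 1).choose (k + 2) * (k + 2) :=
          Nat.le_mul_of_pos_right _ (by omega)
      _ = (N + 1) * N.choose (k + 1) := (Nat.add_one_mul_choose_eq N (k + 1)).symm
      _ ≤ (N + 1) * N ^ (k + 1) := Nat.mul_le_mul_left _ (Nat.choose_le_pow N (k + 1))
  have hpow : N ^ k ≤ (N + 1) ^ k := Nat.pow_le_pow_left (Nat.le_succ N) k
  calc (N + 1).choose (k + 2) + (N + 1) ^ (k + 1)
      ≤ (N + 1) * N * N ^ k + (N + 1) ^ (k + 1) := by rw [mul_assoc, ← pow_succ']; gcongr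
    _ ≤ (N + 1) * N * (N + 1) ^ k + (N + 1) ^ (k + 1) := by gcongr
    _ = (N + 1) ^ (k + 2) := by ring

theorem Nat.sum_range_choose_le_pow_add_one (n k : ℕ) :
    ∑ i ∈ range (k + 2), n.choose i ≤ n ^ (k + 1) + 1 := by
  induction k with
  | zero => simp [sum_range_succ, add_comm]
  | succ k ih =>
    rw [sum_range_succ]
    linarith [Nat.choose_add_two_add_pow_le n k]

section Halfspace

variable {𝕜 E ι : Type*} [Field 𝕜] [LinearOrder 𝕜] [IsStrictOrderedRing 𝕜]
  [AddCommGroup E] [Module 𝕜 E]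

theorem exists_ne_preimage_halfSpace_of_not_affineIndependent {f : ι → E}
    (hf : ¬ AffineIndependent 𝕜 f) :
    ∃ I : Set ι, ∀ (L : E →ₗ[𝕜] 𝕜) (w : 𝕜), f ⁻¹' {y | w ≤ L y} ≠ I := by
  obtain ⟨I, p, hpI, hpIc⟩ := Convex.radon_partition hf
  refine ⟨I, fun L w hLw => ?_⟩
  have hge : w ≤ L p := by
    refine convexHull_min ?_ (convex_halfSpace_ge L.isLinear w) hpI
    rintro _ ⟨i, hi, rfl⟩
    rwa [← hLw] at hi
  have hlt : L p < w := by
    refine convexHull_min ?_ (convex_halfSpace_lt L.isLinear w) hpIc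
    rintro _ ⟨i, hi, rfl⟩
    rw [← hLw] at hi
    exact not_le.mp hi
  exact hlt.not_ge hge

variable (𝕜) [Fintype ι]

noncomputable def halfspaceTraces (f : ι → E) : Finset (Finset ι) :=
  {s | ∃ (L : E →ₗ[𝕜] 𝕜) (w : 𝕜), ∀ i, i ∈ s ↔ w ≤ L (f i)}

variable [FiniteDimensional 𝕜 E]

theorem card_le_finrank_add_one_of_shatters_halfspaceTraces {f : ι → E} {s : Finset ι}
    (hs : (halfspaceTraces 𝕜 f).Shatters s) : #s ≤ Module.finrank 𝕜 E + 1 := by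
  by_contra! hcard
  have hdep : ¬ AffineIndependent 𝕜 (fun i : s => f i) := fun hind => by
    have hspan := Submodule.finrank_le (vectorSpan 𝕜 (Set.range fun i : s => f i))
    have := hind.card_le_finrank_succ
    rw [Fintype.card_coe] at this
    omega
  obtain ⟨I, hI⟩ := exists_ne_preimage_halfSpace_of_not_affineIndependent hdep
  obtain ⟨u, hu, hsu⟩ := hs (filter_subset (fun i => ∃ h : i ∈ s, ⟨i, h⟩ ∈ I) s)
  obtain ⟨L, w, hLw⟩ := (mem_filter.mp hu).2
  refine hI L w (Set.ext fun i => ?_)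
  have hi : i.1 ∈ s ∩ u ↔ i.1 ∈ s.filter (fun i => ∃ h : i ∈ s, ⟨i, h⟩ ∈ I) := by
    rw [hsu]
  simpa [hLw] using hi

theorem vcDim_halfspaceTraces_le (f : ι → E) :
    (halfspaceTraces 𝕜 f).vcDim ≤ Module.finrank 𝕜 E + 1 :=
  Finset.sup_le fun _ hs =>
    card_le_finrank_add_one_of_shatters_halfspaceTraces 𝕜 (mem_shatterer.mp hs)

theorem card_halfspaceTraces_le (f : ι → E) :
    #(halfspaceTraces 𝕜 f) ≤
      ∑ k ∈ range (Module.finrank 𝕜 E + 2), (Fintype.card ι).choose k := by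
  calc #(halfspaceTraces 𝕜 f) ≤ #(halfspaceTraces 𝕜 f).shatterer := card_le_card_shatterer _
    _ ≤ ∑ k ∈ Iic (halfspaceTraces 𝕜 f).vcDim, (Fintype.card ι).choose k :=
        card_shatterer_le_sum_vcDim
    _ ≤ _ := by
        rw [← Nat.range_succ_eq_Iic]
        have := vcDim_halfspaceTraces_le 𝕜 f
        exact sum_le_sum_of_subset (range_subset_range.mpr (by omega))

end Halfspace

/-- The number of distinct halfspace classifiers on a finite set `X ⊆ ℝ^d` is at most
`2 |X|^(d+1)`. -/
theorem card_halfspace_classifiers_le {d : ℕ} (X : Finset (Fin d → ℝ)) (hX : 1 ≤ X.card) :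
    Set.ncard {f : X → Bool | ∃ (a : Fin d → ℝ) (w : ℝ),
        ∀ x : X, f x = decide (w ≤ ∑ j, a j * (x : Fin d → ℝ) j)}
      ≤ 2 * X.card ^ (d + 1) := by
  let positiveSet (f : X → Bool) : Finset X := {x | f x = true}
  have hpositive : Function.Injective positiveSet :=
    fun f g hfg => funext fun x =>
      Bool.eq_iff_iff.mpr (by simpa [positiveSet] using congrArg (x ∈ ·) hfg)
  have hpow : 1 ≤ X.card ^ (d + 1) := Nat.one_le_pow _ _ hX
  calc _ ≤ #(halfspaceTraces ℝ (Subtype.val : X → Fin d → ℝ)) := by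
        rw [← Set.ncard_coe_finset]
        refine Set.ncard_le_ncard_of_injOn positiveSet ?_ hpositive.injOn (finite_toSet _)
        rintro f ⟨a, w, hf⟩
        exact mem_filter.mpr ⟨mem_univ _, dotProductBilin ℝ ℝ a, w,
          fun x => by simp [positiveSet, hf, dotProduct]⟩
    _ ≤ ∑ k ∈ range (d + 2), X.card.choose k := by
        simpa using card_halfspaceTraces_le ℝ (Subtype.val : X → Fin d → ℝ)
    _ ≤ X.card ^ (d + 1) + 1 := Nat.sum_range_choose_le_pow_add_one _ _
    _ ≤ 2 * X.card ^ (d + 1) := by omega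
end

section
/- If a linear subspace V ⊆ ℝ^d has dimension k ≤ d, then the number of points of {1,…,T}^d lying in V is at most T^k. -/
/-!
The coordinate functionals restricted to `V` span its dual, so some `k = dim V` of them form a
basis of it. A point of `V` is then determined by these `k` coordinates, and a grid point has
only `T` choices for each of them.
-/

open Module Set

theorem Submodule.exists_finset_card_eq_finrank_injOn_funLeft {K ι : Type*} [Field K] [Finite ι]
    (V : Submodule K (ι → K)) :
    ∃ S : Finset ι, S.card = finrank K V ∧
      InjOn (LinearMap.funLeft K K ((↑) : S → ι)) V := by
  let coord : ι → Dual K V := fun i => (LinearMap.proj i).comp V.subtype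
  obtain ⟨b, -, -, hspan, hli⟩ :=
    exists_linearIndepOn_extension (linearIndepOn_empty K coord) (empty_subset univ)
  let S := (toFinite b).toFinset
  have hinj : InjOn (LinearMap.funLeft K K ((↑) : S → ι)) V := by
    intro x hx y hy hxy
    set z : V := ⟨x - y, V.sub_mem hx hy⟩
    have hb : coord '' b ⊆ LinearMap.ker (Dual.eval K V z) := by
      rintro _ ⟨i, hi, rfl⟩
      have := congrFun hxy ⟨i, (toFinite b).mem_toFinset.mpr hi⟩
      simpa [coord, z, sub_eq_zero] using this
    have hz : ∀ j, coord j z = 0 := fun j =>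
      Submodule.span_le.mpr hb (hspan (mem_image_of_mem coord (mem_univ j)))
    funext j
    simpa [coord, z, sub_eq_zero] using hz j
  refine ⟨S, le_antisymm ?_ ?_, hinj⟩
  · have hliS : LinearIndepOn K coord (S : Set ι) := by simpa [S] using hli
    simpa using hliS.fintype_card_le_finrank
  · have := LinearMap.finrank_le_finrank_of_injective
      (f := (LinearMap.funLeft K K ((↑) : S → ι)).comp V.subtype)
      (fun x y h => Subtype.ext (hinj x.2 y.2 h))
    simpa using this

/-- `x` is a point of the grid `{1, …, T}^d`. -/
def InGrid (T : ℕ) {d : ℕ} (x : Fin d → ℝ) : Prop :=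
  ∀ j, ∃ k : ℕ, 1 ≤ k ∧ k ≤ T ∧ x j = k

namespace InGrid

variable {T d : ℕ} {x : Fin d → ℝ}

theorem natCast_floor_eq (hx : InGrid T x) (j : Fin d) : (⌊x j⌋₊ : ℝ) = x j := by
  obtain ⟨m, -, -, hm⟩ := hx j
  rw [hm, Nat.floor_natCast]

theorem floor_mem_Icc (hx : InGrid T x) (j : Fin d) : ⌊x j⌋₊ ∈ Finset.Icc 1 T := by
  obtain ⟨m, h1, hT, hm⟩ := hx j
  rw [hm, Nat.floor_natCast]
  exact Finset.mem_Icc.mpr ⟨h1, hT⟩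

end InGrid

theorem grid_points_in_subspace_le_general {T d k : ℕ}
    (V : Submodule ℝ (Fin d → ℝ)) (hV : Module.finrank ℝ V = k) :
    Set.ncard {x : Fin d → ℝ | InGrid T x ∧ x ∈ V} ≤ T ^ k := by
  obtain ⟨S, hS, hinj⟩ := V.exists_finset_card_eq_finrank_injOn_funLeft
  let box : Finset (S → ℕ) := Fintype.piFinset fun _ => Finset.Icc 1 T
  calc _ ≤ (box : Set (S → ℕ)).ncard := by
        refine Set.ncard_le_ncard_of_injOn (fun x i => ⌊x i⌋₊) (fun x hx => ?_)
          (fun x hx y hy hxy => ?_)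
        · exact Fintype.mem_piFinset.mpr fun i => hx.1.floor_mem_Icc i
        · refine hinj hx.2 hy.2 (funext fun i => ?_)
          rw [LinearMap.funLeft_apply, LinearMap.funLeft_apply, ← hx.1.natCast_floor_eq,
            ← hy.1.natCast_floor_eq]
          exact congrArg Nat.cast (congrFun hxy i)
    _ = T ^ k := by
        rw [Set.ncard_coe_finset, Fintype.card_piFinset, Finset.prod_const, Nat.card_Icc,
          Nat.add_sub_cancel, Finset.card_univ, Fintype.card_coe, hS, hV]

/-- A linear subspace of `ℝ^d` of dimension `k ≤ d` contains at most `T^k` points of the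
grid `{1,…,T}^d`. -/
theorem grid_points_in_subspace_le {T d k : ℕ} (hT : 1 ≤ T)
    (V : Submodule ℝ (Fin d → ℝ)) (hV : Module.finrank ℝ V = k) (hk : k ≤ d) :
    Set.ncard {x : Fin d → ℝ | InGrid T x ∧ x ∈ V} ≤ T ^ k :=
  grid_points_in_subspace_le_general V hV
end
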